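/- Let X be a complex Banach space and L(X) the Banach algebra of bounded linear operators on X. Let M = [[A, B], [C, 0]] ∈ M₂(L(X)) and suppose A and BC have strongly Drazin inverses. If A^D (BC) A^D = 0, (BC) A^π (BC) = 0 and (BC) A^π A = 0, where A^D is the Drazin inverse of A and A^π = I − A·A^D, then M has a Hirano inverse in M₂(L(X)). -/

import Mathlib

/-- `a` has a Hirano inverse: there exists `z` with `az = za`, `z = zaz`,
and `a^2 - az` nilpotent. -/
def HasHiranoInverse {R : Type*} [Ring R] (a : R) : Prop :=
  ∃ z : R, a * z = z * a ∧ z = z * a * z ∧ IsNilpotent (a ^ 2 - a * z)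

/-- `a` has a strongly Drazin inverse: there exists `z` with `az = za`, `z = zaz`,
and `a - az` nilpotent. -/
def HasStronglyDrazinInverse {R : Type*} [Ring R] (a : R) : Prop :=
  ∃ z : R, a * z = z * a ∧ z = z * a * z ∧ IsNilpotent (a - a * z)

/-!
Write `P = BC` and `E = AA^D`. An element `m` of a ring has a Hirano inverse as soon as `m - m³`
is nilpotent: lift `m²` to an idempotent in the commutative ring generated by `m`. Since
`M = [[1, 0], [0, C]] * [[A, B], [1, 0]]` and `xy - (xy)³ = x (y - yxyxy)`, the nilpotency of
`M - M³` reduces to that of `N - N³` for `N = [[A, P], [1, 0]]`, a matrix over the subring `S`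
generated by `A` and `P`. The three hypotheses give `P x P y P = 0` for all `x, y ∈ S`, so the
two-sided ideal of `S` generated by `P` has zero cube. Modulo that ideal `N` becomes
`[[A, 0], [1, 0]]`, and `A - A³` is nilpotent because `A - E` is.
-/

section

variable {R : Type*} [Ring R]

theorem isNilpotent_mul_comm {a b : R} (h : IsNilpotent (a * b)) : IsNilpotent (b * a) := by
  obtain ⟨n, hn⟩ := h
  exact ⟨n + 1, by rw [pow_succ', mul_assoc, ← mul_pow_mul, hn, zero_mul, mul_zero]⟩

theorem isNilpotent_sub_pow_three_mul_comm {a b : R} (h : IsNilpotent (a * b - (a * b) ^ 3)) :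
    IsNilpotent (b * a - (b * a) ^ 3) := by
  have hab : a * b - (a * b) ^ 3 = a * (b - b * a * b * a * b) := by noncomm_ring
  have hba : b * a - (b * a) ^ 3 = (b - b * a * b * a * b) * a := by noncomm_ring
  rw [hab] at h
  rw [hba]
  exact isNilpotent_mul_comm h

theorem isNilpotent_sub_pow_three_of_isIdempotentElem {a e : R} (he : IsIdempotentElem e)
    (hae : Commute a e) (h : IsNilpotent (a - e)) : IsNilpotent (a - a ^ 3) := by
  set g := ∑ i ∈ Finset.range 3, a ^ i * e ^ (3 - 1 - i)
  have hg : a - a ^ 3 = (1 - g) * (a - e) := by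
    rw [sub_mul, one_mul, hae.geom_sum₂_mul, he.pow_succ_eq 2]
    abel
  have hcomm : Commute (1 - g) (a - e) := by
    refine (Commute.one_left _).sub_left (Commute.sum_left _ _ _ fun i _ => ?_)
    exact (((Commute.refl a).sub_right hae).pow_left i).mul_left
      ((hae.symm.sub_right (Commute.refl e)).pow_left _)
  rw [hg]
  exact hcomm.isNilpotent_mul_left h

theorem HasHiranoInverse.map {S : Type*} [Ring S] (f : R →+* S) {a : R}
    (h : HasHiranoInverse a) : HasHiranoInverse (f a) := by
  obtain ⟨z, hc, hz, hn⟩ := h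
  refine ⟨f z, ?_, ?_, ?_⟩
  · rw [← map_mul, hc, map_mul]
  · rw [← map_mul, ← map_mul, ← hz]
  · simpa only [map_sub, map_pow, map_mul] using hn.map f

open Polynomial in
theorem exists_isIdempotentElem_isNilpotent_sub {S : Type*} [CommRing S] {x : S}
    (h : IsNilpotent (x - x ^ 2)) : ∃ e : S, IsIdempotentElem e ∧ IsNilpotent (x - e) := by
  have hP : IsNilpotent (aeval x (X ^ 2 - X : ℤ[X])) := by
    rw [map_sub, map_pow, aeval_X, ← neg_sub]
    exact h.neg
  have hP' : IsUnit (aeval x (derivative (X ^ 2 - X : ℤ[X]))) := by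
    have hsq : IsUnit ((2 * x - 1) ^ 2) := by
      convert ((Commute.all 4 _).isNilpotent_mul_left h).neg.isUnit_one_add using 1
      ring
    simpa [isUnit_pow_iff, map_ofNat] using hsq
  obtain ⟨e, ⟨hxe, he⟩, -⟩ := existsUnique_nilpotent_sub_and_aeval_eq_zero hP hP'
  refine ⟨e, ?_, hxe⟩
  simpa [IsIdempotentElem, sq, sub_eq_zero] using he

theorem hasHiranoInverse_of_isNilpotent_sub_pow_three_of_comm {S : Type*} [CommRing S] {a : S}
    (h : IsNilpotent (a - a ^ 3)) : HasHiranoInverse a := by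
  have hsq : IsNilpotent (a ^ 2 - (a ^ 2) ^ 2) := by
    convert (Commute.all a _).isNilpotent_mul_left h using 1
    ring
  obtain ⟨e, he, hn⟩ := exists_isIdempotentElem_isNilpotent_sub hsq
  obtain ⟨u, hu⟩ := ((Commute.all _ e).isNilpotent_mul_right hn).isUnit_one_add
  have hae : a ^ 2 * e = e * u := by
    rw [hu]
    linear_combination (e + 1 - a ^ 2) * he.eq
  have haz : a * (a * e * ↑u⁻¹) = e := by
    rw [← mul_assoc, ← mul_assoc, ← sq, hae, mul_assoc, Units.mul_inv, mul_one]
  refine ⟨a * e * ↑u⁻¹, mul_comm _ _, ?_, by rwa [haz]⟩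
  rw [mul_assoc _ a, haz]
  linear_combination (a * ↑u⁻¹) * he.eq.symm

open scoped IsMulCommutative in
theorem hasHiranoInverse_of_isNilpotent_sub_pow_three {a : R} (h : IsNilpotent (a - a ^ 3)) :
    HasHiranoInverse a := by
  let C := Subring.closure ({a} : Set R)
  have : IsMulCommutative C := Subring.isMulCommutative_closure (by simp)
  let a' : C := ⟨a, Subring.subset_closure rfl⟩
  have h' : IsNilpotent (a' - a' ^ 3) :=
    (IsNilpotent.map_iff (f := C.subtype) Subtype.val_injective).1 h
  exact (hasHiranoInverse_of_isNilpotent_sub_pow_three_of_comm h').map C.subtype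

theorem isNilpotent_of_isNilpotent_map {S : Type*} [Ring S] (f : R →+* S)
    (hf : ∀ a b c, f a = 0 → f b = 0 → f c = 0 → a * b * c = 0) {x : R}
    (hx : IsNilpotent (f x)) : IsNilpotent x := by
  obtain ⟨k, hk⟩ := hx
  have hxk : f (x ^ k) = 0 := by rw [map_pow, hk]
  exact ⟨k * 3, by rw [pow_mul, pow_three', hf _ _ _ hxk hxk hxk]⟩

theorem RingHom.mapMatrix_mul_mul_eq_zero {n S : Type*} [Fintype n] [DecidableEq n] [Ring S]
    (f : R →+* S) (hf : ∀ a b c, f a = 0 → f b = 0 → f c = 0 → a * b * c = 0)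
    (A B C : Matrix n n R) (hA : f.mapMatrix A = 0) (hB : f.mapMatrix B = 0)
    (hC : f.mapMatrix C = 0) : A * B * C = 0 := by
  have entry {M : Matrix n n R} (hM : f.mapMatrix M = 0) (k l : n) : f (M k l) = 0 :=
    congrFun₂ hM k l
  ext i j
  simp only [Matrix.mul_apply, Finset.sum_mul, Matrix.zero_apply]
  exact Finset.sum_eq_zero fun k _ => Finset.sum_eq_zero fun l _ =>
    hf _ _ _ (entry hA i l) (entry hB l k) (entry hC k j)

theorem TwoSidedIdeal.mul_mul_eq_zero_of_mem_span_singleton {p : R}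
    (hp : ∀ x y, p * x * p * y * p = 0) {a b c : R} (ha : a ∈ span {p}) (hb : b ∈ span {p})
    (hc : c ∈ span {p}) : a * b * c = 0 := by
  have h1 : ∀ c ∈ span {p}, ∀ x y, p * x * p * y * c = 0 := by
    intro c hc
    induction hc using span_induction with
    | mem c hc => rw [Set.mem_singleton_iff.1 hc]; exact hp
    | zero => simp
    | add c d _ _ hc hd => simp [mul_add, hc, hd]
    | neg c _ hc => simp [hc]
    | left_absorb d c _ hc => intro x y; simpa [mul_assoc] using hc x (y * d)
    | right_absorb d c _ hc => intro x y; rw [← mul_assoc, hc, zero_mul]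
  have h2 : ∀ b ∈ span {p}, ∀ c ∈ span {p}, ∀ x, p * x * b * c = 0 := by
    intro b hb
    induction hb using span_induction with
    | mem b hb => rw [Set.mem_singleton_iff.1 hb]; intro c hc x; simpa using h1 c hc x 1
    | zero => simp
    | add b d _ _ hb hd => intro c hc x; simp [mul_add, add_mul, hb c hc, hd c hc]
    | neg b _ hb => intro c hc x; simp [hb c hc]
    | left_absorb d b _ hb => intro c hc x; simpa [mul_assoc] using hb c hc (x * d)
    | right_absorb d b _ hb =>
      intro c hc x; simpa [mul_assoc] using hb _ (mul_mem_left _ d c hc) x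
  induction ha using span_induction generalizing b with
  | mem a ha => rw [Set.mem_singleton_iff.1 ha]; simpa using h2 b hb c hc 1
  | zero => simp
  | add a d _ _ ha hd => simp [add_mul, ha hb, hd hb]
  | neg a _ ha => simp [ha hb]
  | left_absorb d a _ ha => simp [mul_assoc, ha hb]
  | right_absorb d a _ ha => simpa [mul_assoc] using ha (mul_mem_left _ d b hb)

theorem Matrix.pow_succ_fin_two_col_zero (x y : R) (n : ℕ) :
    !![x, 0; y, 0] ^ (n + 1) = !![x ^ (n + 1), 0; y * x ^ n, 0] := by
  induction n with
  | zero => simp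
  | succ n ih =>
    rw [pow_succ, ih, Matrix.mul_fin_two]
    simp [pow_succ, mul_assoc]

theorem Matrix.isNilpotent_fin_two_col_zero {x : R} (hx : IsNilpotent x) (y : R) :
    IsNilpotent !![x, 0; y, 0] := by
  obtain ⟨n, hn⟩ := hx
  refine ⟨n + 1, ?_⟩
  rw [Matrix.pow_succ_fin_two_col_zero, pow_succ, hn]
  ext i j
  fin_cases i <;> fin_cases j <;> simp

theorem isNilpotent_antiTriangular_sub_pow_three {a p : R} (hp : ∀ x y, p * x * p * y * p = 0)
    (ha : IsNilpotent (a - a ^ 3)) : IsNilpotent (!![a, p; 1, 0] - !![a, p; 1, 0] ^ 3) := by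
  let π := (TwoSidedIdeal.span {p}).ringCon.mk'
  have hπ (x : R) : π x = 0 ↔ x ∈ TwoSidedIdeal.span {p} := by
    rw [← TwoSidedIdeal.mem_ker, TwoSidedIdeal.ker_ringCon_mk']
  have hker : ∀ x y z, π x = 0 → π y = 0 → π z = 0 → x * y * z = 0 := by
    simp only [hπ]
    exact fun x y z => TwoSidedIdeal.mul_mul_eq_zero_of_mem_span_singleton hp
  refine isNilpotent_of_isNilpotent_map π.mapMatrix (π.mapMatrix_mul_mul_eq_zero hker) ?_
  have hπp : π p = 0 := (hπ p).2 (TwoSidedIdeal.subset_span rfl)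
  have hN : π.mapMatrix !![a, p; 1, 0] = !![π a, 0; 1, 0] := by
    ext i j
    fin_cases i <;> fin_cases j <;> simp [hπp]
  have hN3 : !![π a, 0; 1, 0] - !![π a, 0; 1, 0] ^ 3 = !![π a - π a ^ 3, 0; 1 - π a ^ 2, 0] := by
    rw [Matrix.pow_succ_fin_two_col_zero]
    ext i j
    fin_cases i <;> fin_cases j <;> simp
  rw [map_sub, map_pow, hN, hN3]
  exact Matrix.isNilpotent_fin_two_col_zero (by simpa using ha.map π) _

theorem isNilpotent_antiTriangular_sub_pow_three_of_mem_closure {a p : R}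
    (hp : ∀ x ∈ Subring.closure {a, p}, ∀ y ∈ Subring.closure {a, p}, p * x * p * y * p = 0)
    (ha : IsNilpotent (a - a ^ 3)) : IsNilpotent (!![a, p; 1, 0] - !![a, p; 1, 0] ^ 3) := by
  let S := Subring.closure {a, p}
  let a' : S := ⟨a, Subring.subset_closure (by simp)⟩
  let p' : S := ⟨p, Subring.subset_closure (by simp)⟩
  have hp' : ∀ x y : S, p' * x * p' * y * p' = 0 := fun x y => Subtype.ext (hp x x.2 y y.2)
  have ha' : IsNilpotent (a' - a' ^ 3) :=
    (IsNilpotent.map_iff (f := S.subtype) Subtype.val_injective).1 ha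
  have h := (isNilpotent_antiTriangular_sub_pow_three hp' ha').map S.subtype.mapMatrix
  have hN : S.subtype.mapMatrix !![a', p'; 1, 0] = !![a, p; 1, 0] := by
    ext i j
    fin_cases i <;> fin_cases j <;> rfl
  rwa [map_sub, map_pow, hN] at h

section Closure

variable {a p e : R}

theorem mul_mem_span_of_mem_closure (hpp : p * (1 - e) * p = 0) (hpa : p * (1 - e) * a = 0)
    {x : R} (hx : x ∈ Subring.closure {a, p}) {j : R} (hj : j ∈ Ideal.span {p * (1 - e)}) :
    j * x ∈ Ideal.span {p * (1 - e)} := by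
  induction hx using Subring.closure_induction generalizing j with
  | mem x hx =>
    obtain ⟨c, rfl⟩ := Ideal.mem_span_singleton'.1 hj
    obtain rfl | rfl : x = a ∨ x = p := hx
    · rw [mul_assoc, hpa, mul_zero]; exact zero_mem _
    · rw [mul_assoc, hpp, mul_zero]; exact zero_mem _
  | zero => rw [mul_zero]; exact zero_mem _
  | one => rwa [mul_one]
  | add x y _ _ hx hy => rw [mul_add]; exact add_mem (hx hj) (hy hj)
  | neg x _ hx => rw [mul_neg]; exact neg_mem (hx hj)
  | mul x y _ _ hx hy => rw [← mul_assoc]; exact hy (hx hj)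

theorem mul_mul_one_sub_mem_span_of_mem_closure (he : IsIdempotentElem e) (hae : Commute a e)
    (hpp : p * (1 - e) * p = 0) (hpa : p * (1 - e) * a = 0)
    {x : R} (hx : x ∈ Subring.closure {a, p}) : e * x * (1 - e) ∈ Ideal.span {p * (1 - e)} := by
  have he0 : e * (1 - e) = 0 := by rw [mul_sub, mul_one, he.eq, sub_self]
  induction hx using Subring.closure_induction with
  | mem x hx =>
    obtain rfl | rfl : x = a ∨ x = p := hx
    · rw [← hae.eq, mul_assoc, he0, mul_zero]; exact zero_mem _
    · rw [mul_assoc]; exact Ideal.mul_mem_left _ _ (Ideal.mem_span_singleton_self _)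
  | zero => rw [mul_zero, zero_mul]; exact zero_mem _
  | one => rw [mul_one, he0]; exact zero_mem _
  | add x y _ _ hx hy => rw [mul_add, add_mul]; exact add_mem hx hy
  | neg x _ hx => rw [mul_neg, neg_mul]; exact neg_mem hx
  | mul x y _ hy hx hy' =>
    have hsplit : e * (x * y) * (1 - e) =
        e * x * (e * y * (1 - e)) + e * x * (1 - e) * y * (1 - e) := by
      noncomm_ring
    rw [hsplit]
    refine add_mem (Ideal.mul_mem_left _ _ hy') ?_
    obtain ⟨c, hc⟩ := Ideal.mem_span_singleton'.1 (mul_mem_span_of_mem_closure hpp hpa hy hx)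
    rw [← hc, mul_assoc, mul_assoc, he.one_sub.eq]
    exact Ideal.mul_mem_left _ _ (Ideal.mem_span_singleton_self _)

theorem mul_mul_mul_mul_eq_zero_of_mem_closure (he : IsIdempotentElem e) (hae : Commute a e)
    (hepe : e * p * e = 0) (hpp : p * (1 - e) * p = 0) (hpa : p * (1 - e) * a = 0)
    {x y : R} (hx : x ∈ Subring.closure {a, p}) (hy : y ∈ Subring.closure {a, p}) :
    p * x * p * y * p = 0 := by
  have hL : ∀ j ∈ Ideal.span {p * (1 - e)}, j * p = 0 := by
    intro j hj
    obtain ⟨c, rfl⟩ := Ideal.mem_span_singleton'.1 hj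
    rw [mul_assoc, hpp, mul_zero]
  have hpzp : ∀ z ∈ Subring.closure {a, p}, p * z * p = p * e * z * p := by
    intro z hz
    have h := hL _ (mul_mem_span_of_mem_closure hpp hpa hz (Ideal.mem_span_singleton_self _))
    rw [← sub_eq_zero, ← h]
    noncomm_ring
  have hpe : p * e = (1 - e) * p * e := by rw [sub_mul, sub_mul, one_mul, hepe, sub_zero]
  calc p * x * p * y * p = p * e * x * (p * e * y * p) := by
        rw [hpzp x hx, ← hpzp y hy]; noncomm_ring
    _ = p * e * x * ((1 - e) * p * e * y * p) := by rw [← hpe]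
    _ = p * (e * x * (1 - e) * p) * (e * y * p) := by noncomm_ring
    _ = 0 := by
        rw [hL _ (mul_mul_one_sub_mem_span_of_mem_closure he hae hpp hpa hx), mul_zero, zero_mul]

end Closure

theorem hasHiranoInverse_antiTriangular {a b c e : R} (he : IsIdempotentElem e)
    (hae : Commute a e) (hnil : IsNilpotent (a - e)) (hepe : e * (b * c) * e = 0)
    (hpp : b * c * (1 - e) * (b * c) = 0) (hpa : b * c * (1 - e) * a = 0) :
    HasHiranoInverse !![a, b; c, 0] := by
  refine hasHiranoInverse_of_isNilpotent_sub_pow_three ?_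
  have hfactor : !![a, b; c, 0] = !![1, 0; 0, c] * !![a, b; 1, 0] := by
    simp
  have hswap : !![a, b; 1, 0] * !![1, 0; 0, c] = !![a, b * c; 1, 0] := by
    simp
  rw [hfactor]
  refine isNilpotent_sub_pow_three_mul_comm ?_
  rw [hswap]
  exact isNilpotent_antiTriangular_sub_pow_three_of_mem_closure
    (fun x hx y hy => mul_mul_mul_mul_eq_zero_of_mem_closure he hae hepe hpp hpa hx hy)
    (isNilpotent_sub_pow_three_of_isIdempotentElem he hae hnil)

end

variable {X : Type*} [NormedAddCommGroup X] [NormedSpace ℂ X] [CompleteSpace X]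

theorem hirano_anti_triangular_BC_general (A B C AD : X →L[ℂ] X)
    (hAD : A * AD = AD * A ∧ AD = AD * A * AD ∧ IsNilpotent (A - A * AD))
    (h1 : AD * (B * C) * AD = 0)
    (h2 : (B * C) * (1 - A * AD) * (B * C) = 0)
    (h3 : (B * C) * (1 - A * AD) * A = 0) :
    HasHiranoInverse (!![A, B; C, 0] : Matrix (Fin 2) (Fin 2) (X →L[ℂ] X)) := by
  obtain ⟨hcomm, hdrazin, hnil⟩ := hAD
  have he : IsIdempotentElem (A * AD) := by
    rw [IsIdempotentElem, mul_assoc, ← mul_assoc AD, ← hdrazin]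
  have hepe : A * AD * (B * C) * (A * AD) = 0 :=
    calc A * AD * (B * C) * (A * AD) = A * AD * (B * C) * (AD * A) := by rw [hcomm]
      _ = A * (AD * (B * C) * AD) * A := by noncomm_ring
      _ = 0 := by rw [h1, mul_zero, zero_mul]
  exact hasHiranoInverse_antiTriangular he ((Commute.refl A).mul_right hcomm) hnil hepe h2 h3

theorem hirano_anti_triangular_BC (A B C AD : X →L[ℂ] X)
    (hAD : A * AD = AD * A ∧ AD = AD * A * AD ∧ IsNilpotent (A - A * AD))
    (hBC : HasStronglyDrazinInverse (B * C))
    (h1 : AD * (B * C) * AD = 0)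
    (h2 : (B * C) * (1 - A * AD) * (B * C) = 0)
    (h3 : (B * C) * (1 - A * AD) * A = 0) :
    HasHiranoInverse (!![A, B; C, 0] : Matrix (Fin 2) (Fin 2) (X →L[ℂ] X)) :=
  hirano_anti_triangular_BC_general A B C AD hAD h1 h2 h3
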